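/- For every integer k ≥ 2, there exists a graph homomorphism from the Schrijver graph SG(2k+2, k) to the symmetric shift graph S_4. -/

import Mathlib

universe u

/-- An orientation of a simple graph: each edge receives exactly one of its two directions. -/
structure GraphOrientation {V : Type u} (G : SimpleGraph V) where
  dir : V → V → Prop
  adj_iff : ∀ u v, G.Adj u v ↔ (dir u v ∨ dir v u)
  asymm : ∀ u v, dir u v → ¬ dir v u

/-- The closed out-neighborhood of a vertex in an orientation. -/
def GraphOrientation.closedOutNbhd {V : Type u} {G : SimpleGraph V}
    (D : GraphOrientation G) (v : V) : Set V :=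
  insert v {u | D.dir v u}

/-- The directed local chromatic number of an oriented graph: the least `n` such that some
proper coloring of the underlying graph puts at most `n` colors on every closed
out-neighborhood. -/
noncomputable def psiD {V : Type u} {G : SimpleGraph V} (D : GraphOrientation G) : ℕ∞ :=
  sInf {n : ℕ∞ | ∃ c : V → ℕ, (∀ u w, G.Adj u w → c u ≠ c w) ∧
    ∀ v, (c '' D.closedOutNbhd v).encard ≤ n}

/-- `ψ_{d,min}`: the minimum of `ψ_d` over all orientations of `G`. -/
noncomputable def psiDMin {V : Type u} (G : SimpleGraph V) : ℕ∞ :=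
  ⨅ D : GraphOrientation G, psiD D

/-- `f : ZMod n → V` describes a cycle of length `n` in `G`. -/
def SimpleGraph.IsCycleMap {V : Type u} (G : SimpleGraph V) {n : ℕ} (f : ZMod n → V) : Prop :=
  Function.Injective f ∧ ∀ i, G.Adj (f i) (f (i + 1))

/-- The cycle described by `f` is alternating with respect to the direction relation `D`:
exactly one of its vertices is neither a source nor a sink of the cycle. -/
def IsAltCycle {V : Type u} (D : V → V → Prop) {n : ℕ} (f : ZMod n → V) : Prop :=
  ∃! i : ZMod n,
    ¬ ((D (f i) (f (i - 1)) ∧ D (f i) (f (i + 1))) ∨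
       (D (f (i - 1)) (f i) ∧ D (f (i + 1)) (f i)))

/-- The orientation `D` of `G` contains an alternating odd cycle. -/
def HasAltOddCycle {V : Type u} {G : SimpleGraph V} (D : GraphOrientation G) : Prop :=
  ∃ (n : ℕ) (f : ZMod n → V), Odd n ∧ G.IsCycleMap f ∧ IsAltCycle D.dir f

/-- The odd girth of `G`: the length of a shortest odd cycle. -/
noncomputable def oddGirth {V : Type u} (G : SimpleGraph V) : ℕ :=
  sInf {n | Odd n ∧ ∃ f : ZMod n → V, G.IsCycleMap f}

/-- The symmetric shift graph `S_m`. -/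
def shiftGraph (m : ℕ) : SimpleGraph {p : Fin m × Fin m // p.1 ≠ p.2} where
  Adj x y := x.1.2 = y.1.1 ∨ x.1.1 = y.1.2
  symm := ⟨fun _ _ h => h.elim (fun h => Or.inr h.symm) (fun h => Or.inl h.symm)⟩
  loopless := ⟨fun x h => h.elim (fun h => x.2 h.symm) (fun h => x.2 h)⟩

/-- The Kneser graph `KG(n,k)`. -/
def kneserGraph (n k : ℕ) : SimpleGraph {A : Finset (Fin n) // A.card = k} where
  Adj A B := Disjoint A.1 B.1 ∧ A ≠ B
  symm := ⟨fun _ _ h => ⟨h.1.symm, h.2.symm⟩⟩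
  loopless := ⟨fun _ h => h.2 rfl⟩

/-- A subset of `Fin n` (thought of as `[n]` arranged cyclically) is stable if it contains
no two cyclically consecutive elements. -/
def IsStableSet {n : ℕ} (A : Finset (Fin n)) : Prop :=
  ∀ i ∈ A, ∀ j ∈ A, (i.val + 1) % n ≠ j.val

/-- The Schrijver graph `SG(n,k)`. -/
def schrijverGraph (n k : ℕ) :
    SimpleGraph {A : Finset (Fin n) // A.card = k ∧ IsStableSet A} where
  Adj A B := Disjoint A.1 B.1 ∧ A ≠ B
  symm := ⟨fun _ _ h => ⟨h.1.symm, h.2.symm⟩⟩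
  loopless := ⟨fun _ h => h.2 rfl⟩

/-- The `r`-level generalized Mycielskian `M_r(G)`; `none` is the apex vertex `z`. -/
def genMycielskian {V : Type u} (G : SimpleGraph V) (r : ℕ) :
    SimpleGraph (Option (V × Fin r)) where
  Adj x y :=
    match x, y with
    | some (u, i), some (v, j) =>
        G.Adj u v ∧ (i.val + 1 = j.val ∨ j.val + 1 = i.val ∨ (i.val = 0 ∧ j.val = 0))
    | some (_, i), none => i.val = r - 1
    | none, some (_, j) => j.val = r - 1
    | none, none => False
  symm := by
    refine ⟨?_⟩
    rintro (_ | ⟨u, i⟩) (_ | ⟨v, j⟩) h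
    · exact h
    · exact h
    · exact h
    · exact ⟨h.1.symm, by tauto⟩
  loopless := by
    refine ⟨?_⟩
    rintro (_ | ⟨u, i⟩) h
    · exact h
    · exact G.ne_of_adj h.1 rfl


/-!
A stable `k`-subset `A` of the cycle `ℤ/(2k+2)` has `k + 2` non-elements, and `k` of them are
followed by an element of `A`; so exactly two windows `{i, i + 1}` miss `A`. Their left ends, the
markers of `A`, have opposite parities (count the even points), and writing `e` and `o` for the
even and the odd marker, `A` gets the coordinates `((e + 2) / 2, (o + 1) / 2)` in `ℤ/(k+1)`.

If `A` and `B` are disjoint, exactly two points lie outside `A ∪ B`, and each marker window of one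
set meets that gap (it cannot lie in the other, stable, set). If the markers of `A` are not
adjacent, their windows each carry one gap point, and this forces each marker of `B` to be
adjacent to the marker of `A` of the other parity. If the markers of both sets are adjacent, each
set is every other point of the cycle, which forces the two pairs of markers to have opposite
orientations. In coordinates this leaves a short list of possible edges, and an explicit table
into `S_4`, checked by cases (this uses `k + 1 ≥ 3`), sends all of them to edges.
-/

open Finset Fin.CommRing

section Markers

variable {n : ℕ} [NeZero n] {A : Finset (Fin n)} {x : Fin n}

def markers (A : Finset (Fin n)) : Finset (Fin n) := {i | i ∉ A ∧ i + 1 ∉ A}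

@[simp]
lemma mem_markers : x ∈ markers A ↔ x ∉ A ∧ x + 1 ∉ A := by
  simp [markers]

lemma IsStableSet.add_one_notMem (hA : IsStableSet A) (hx : x ∈ A) : x + 1 ∉ A :=
  fun hx' => hA x hx _ hx' (by rw [Fin.val_add, Fin.val_one', Nat.add_mod_mod])

lemma IsStableSet.card_filter_eq (hA : IsStableSet A) (p : Fin n → Prop) [DecidablePred p] :
    #{i | p i} = #{i ∈ A | p i} + #{i ∈ A | p (i - 1)} + #{i ∈ markers A | p i} := by
  have hpred : #{i | p i ∧ i + 1 ∈ A} = #{i ∈ A | p (i - 1)} :=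
    card_equiv (Equiv.addRight 1) (by simp [and_comm])
  have hnot : #{i | p i ∧ i ∉ A} = #{i | p i ∧ i + 1 ∈ A} + #{i ∈ markers A | p i} := by
    rw [← card_filter_add_card_filter_not (p := fun i => i + 1 ∈ A)]
    simp only [filter_filter]
    congr 2
    · ext i
      have := hA.add_one_notMem (x := i)
      simp only [mem_filter, mem_univ, true_and]
      tauto
    · ext i
      simp only [mem_filter, mem_univ, true_and, mem_markers]
      tauto
  rw [add_assoc, ← hpred, ← hnot, ← card_filter_add_card_filter_not (p := (· ∈ A))]
  simp only [filter_filter]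
  congr 2
  ext i
  simp [and_comm]

lemma IsStableSet.card_markers (hA : IsStableSet A) : #(markers A) + 2 * #A = n := by
  have := hA.card_filter_eq (fun _ => True)
  simp only [filter_true, card_univ, Fintype.card_fin] at this
  omega

end Markers

lemma Fin.val_add_mod_two {n : ℕ} (hn : 2 ∣ n) (x y : Fin n) :
    (x + y).val % 2 = (x.val + y.val) % 2 := by
  rw [Fin.val_add, Nat.mod_mod_of_dvd _ hn]

section Parity

variable {n : ℕ} [NeZero n] {A : Finset (Fin n)}

lemma Fin.val_add_one_mod_two (hn : 2 ∣ n) (x : Fin n) : (x + 1).val % 2 = (x.val + 1) % 2 := by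
  rw [Fin.val_add, Fin.val_one', Nat.add_mod_mod, Nat.mod_mod_of_dvd _ hn]

lemma Fin.val_sub_one_mod_two (hn : 2 ∣ n) (x : Fin n) : (x - 1).val % 2 = (x.val + 1) % 2 := by
  have := Fin.val_add_one_mod_two hn (x - 1)
  rw [sub_add_cancel] at this
  omega

lemma Fin.val_add_two_mod_two (hn : 2 ∣ n) (x : Fin n) : (x + 2).val % 2 = x.val % 2 := by
  have h1 := Fin.val_add_one_mod_two hn x
  have h2 := Fin.val_add_one_mod_two hn (x + 1)
  rw [show x + 2 = x + 1 + 1 by ring]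
  omega

lemma IsStableSet.card_even_markers_eq_card_odd_markers (hA : IsStableSet A) (hn : 2 ∣ n) :
    #{i ∈ markers A | i.val % 2 = 0} = #{i ∈ markers A | i.val % 2 = 1} := by
  have hsub (r : ℕ) : #{i ∈ A | (i - 1).val % 2 = r} = #{i ∈ A | (i.val + 1) % 2 = r} := by
    simp only [Fin.val_sub_one_mod_two hn]
  have hevens : #{i : Fin n | i.val % 2 = 0} = #{i : Fin n | i.val % 2 = 1} :=
    card_equiv (Equiv.addRight 1) fun i => by
      simp only [mem_filter, mem_univ, true_and, Equiv.coe_addRight, Fin.val_add_one_mod_two hn]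
      omega
  have hA2 : #{i ∈ A | (i.val + 1) % 2 = 0} = #{i ∈ A | i.val % 2 = 1} :=
    congrArg card (filter_congr fun i _ => by omega)
  have hA1 : #{i ∈ A | (i.val + 1) % 2 = 1} = #{i ∈ A | i.val % 2 = 0} :=
    congrArg card (filter_congr fun i _ => by omega)
  have h0 := hA.card_filter_eq (fun i => i.val % 2 = 0)
  have h1 := hA.card_filter_eq (fun i => i.val % 2 = 1)
  simp only [hsub, hA1, hA2] at h0 h1
  omega

lemma IsStableSet.exists_markers_eq_pair {k : ℕ} {A : Finset (Fin (2 * k + 2))}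
    (hA : IsStableSet A) (hcard : #A = k) :
    ∃ e o : Fin (2 * k + 2), e.val % 2 = 0 ∧ o.val % 2 = 1 ∧ markers A = {e, o} := by
  have hodd : {i ∈ markers A | ¬ i.val % 2 = 0} = {i ∈ markers A | i.val % 2 = 1} :=
    filter_congr fun i _ => by omega
  have htotal := hA.card_markers
  have hsplit := card_filter_add_card_filter_not (s := markers A) (fun i => i.val % 2 = 0)
  have heq := hA.card_even_markers_eq_card_odd_markers ⟨k + 1, by ring⟩
  rw [hodd] at hsplit
  obtain ⟨e, he⟩ := card_eq_one.mp (show #{i ∈ markers A | i.val % 2 = 0} = 1 by omega)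
  obtain ⟨o, ho⟩ := card_eq_one.mp (show #{i ∈ markers A | i.val % 2 = 1} = 1 by omega)
  have he' : e ∈ {i ∈ markers A | i.val % 2 = 0} := he ▸ mem_singleton_self e
  have ho' : o ∈ {i ∈ markers A | i.val % 2 = 1} := ho ▸ mem_singleton_self o
  refine ⟨e, o, (mem_filter.mp he').2, (mem_filter.mp ho').2, ?_⟩
  rw [← filter_union_filter_not_eq (fun i => i.val % 2 = 0) (markers A), hodd, he, ho]
  rfl

end Parity

section Overlap

variable {n : ℕ} [NeZero n] {a b w : Fin n}

lemma eq_or_adj_of_overlap (ha : w = a ∨ w = a + 1) (hb : w = b ∨ w = b + 1) :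
    a = b ∨ a = b + 1 ∨ a + 1 = b := by
  rcases ha with rfl | rfl <;> rcases hb with h | h
  · exact Or.inl h
  · exact Or.inr (Or.inl h)
  · exact Or.inr (Or.inr h)
  · exact Or.inl (add_right_cancel h)

lemma ne_add_one_of_val_mod_two_eq (hn : 2 ∣ n) (h : a.val % 2 = b.val % 2) : a ≠ b + 1 := by
  rintro rfl
  rw [Fin.val_add_one_mod_two hn] at h
  omega

lemma eq_of_overlap_of_val_mod_two_eq (hn : 2 ∣ n) (h : a.val % 2 = b.val % 2)
    (ha : w = a ∨ w = a + 1) (hb : w = b ∨ w = b + 1) : a = b := by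
  rcases eq_or_adj_of_overlap ha hb with hab | hab | hab
  · exact hab
  · exact absurd hab (ne_add_one_of_val_mod_two_eq hn h)
  · exact absurd hab.symm (ne_add_one_of_val_mod_two_eq hn h.symm)

lemma adj_of_overlap_of_val_mod_two_ne (h : a.val % 2 ≠ b.val % 2)
    (ha : w = a ∨ w = a + 1) (hb : w = b ∨ w = b + 1) : a + 1 = b ∨ b + 1 = a := by
  rcases eq_or_adj_of_overlap ha hb with rfl | hab | hab
  · exact absurd rfl h
  · exact Or.inr hab.symm
  · exact Or.inl hab

end Overlap

section Disjoint

variable {n : ℕ} [NeZero n] {A B : Finset (Fin n)} {x y z : Fin n}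

lemma IsStableSet.exists_mem_compl_union (hB : IsStableSet B) (hx : x ∈ markers A) :
    ∃ u ∈ (A ∪ B)ᶜ, u = x ∨ u = x + 1 := by
  rw [mem_markers] at hx
  by_contra! h
  have hx0 : x ∈ B := by simpa [hx.1] using h x
  have hx1 : x + 1 ∈ B := by simpa [hx.2] using h (x + 1)
  exact hB.add_one_notMem hx0 hx1

lemma compl_union_eq_of_mem_markers (hU : #(A ∪ B)ᶜ = 2) (hxx : x ≠ x + 1)
    (hA : x ∈ markers A) (hB : x ∈ markers B) : (A ∪ B)ᶜ = {x, x + 1} := by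
  rw [mem_markers] at hA hB
  refine (eq_of_subset_of_card_le ?_ ?_).symm
  · intro u hu
    rcases mem_insert.mp hu with rfl | hu
    · simp [hA.1, hB.1]
    · rw [mem_singleton.mp hu]; simp [hA.2, hB.2]
  · rw [hU, card_pair hxx]

lemma IsStableSet.markers_adj_of_card_compl_union (hA : IsStableSet A) (hB : IsStableSet B)
    (hn : 2 ∣ n) (hU : #(A ∪ B)ᶜ = 2) (hx : x ∈ markers A) (hz : z ∈ markers A)
    (hy : y ∈ markers B) (hxz : x.val % 2 ≠ z.val % 2) (hyx : y.val % 2 = x.val % 2)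
    (hfar : ¬(x + 1 = z ∨ z + 1 = x)) : y + 1 = z ∨ z + 1 = y := by
  obtain ⟨α, hαU, hα⟩ := hB.exists_mem_compl_union hx
  obtain ⟨β, hβU, hβ⟩ := hB.exists_mem_compl_union hz
  obtain ⟨u, huU, hu⟩ := hA.exists_mem_compl_union hy
  have hαβ : α ≠ β := by
    rintro rfl
    exact hfar (adj_of_overlap_of_val_mod_two_ne hxz hα hβ)
  have hUeq : (A ∪ B)ᶜ = {α, β} :=
    (eq_of_subset_of_card_le (insert_subset_iff.mpr ⟨hαU, singleton_subset_iff.mpr hβU⟩)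
      (by rw [hU, card_pair hαβ])).symm
  rw [union_comm, hUeq, mem_insert, mem_singleton] at huU
  rcases huU with rfl | rfl
  · -- then `y = x` is a marker of both sets, so the gap is `{x, x + 1}`, out of reach of `z`
    obtain rfl : y = x := eq_of_overlap_of_val_mod_two_eq hn hyx hu hα
    have hyy : y ≠ y + 1 := ne_add_one_of_val_mod_two_eq hn rfl
    have hβU' := compl_union_eq_of_mem_markers hU hyy hx hy ▸ hβU
    rw [mem_insert, mem_singleton] at hβU'
    exact absurd (Or.comm.mp (adj_of_overlap_of_val_mod_two_ne (Ne.symm hxz) hβ hβU')) hfar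
  · exact adj_of_overlap_of_val_mod_two_ne (by omega) hu hβ

end Disjoint

section Consecutive

variable {n : ℕ} [NeZero n] {A : Finset (Fin n)} {x : Fin n}

lemma IsStableSet.add_two_mul_add_one_mem (hA : IsStableSet A) {m : ℕ} (hx : x ∉ A)
    (hm : ∀ j < 2 * m, x + (j : Fin n) ∉ markers A) :
    ∀ j < m, x + ((2 * j + 1 : ℕ) : Fin n) ∈ A := by
  have step (j : ℕ) (hj : j < 2 * m) (hjA : x + (j : Fin n) ∉ A) :
      x + ((j + 1 : ℕ) : Fin n) ∈ A := by
    by_contra h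
    rw [Nat.cast_succ, ← add_assoc] at h
    exact hm j hj (mem_markers.mpr ⟨hjA, h⟩)
  intro j
  induction j with
  | zero => intro _; exact step 0 (by omega) (by simpa using hx)
  | succ j ih =>
    intro hj
    have hodd := hA.add_one_notMem (ih (by omega))
    rw [add_assoc, ← Nat.cast_succ] at hodd
    exact step _ (by omega) hodd

lemma IsStableSet.mem_of_markers_eq {k : ℕ} {A : Finset (Fin (2 * k + 2))}
    {x z : Fin (2 * k + 2)} (hA : IsStableSet A) (hM : markers A = {x, x + 1})
    (hz : z.val % 2 = (x + 1).val % 2) (hzx : z ≠ x + 1) : z ∈ A := by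
  have hx2 : x + 1 + 1 ∉ A := (mem_markers.mp (hM ▸ by simp : x + 1 ∈ markers A)).2
  have hnot (j : ℕ) (hj : j < 2 * k) (c : Fin (2 * k + 2)) (hc : c.val ≤ 1) :
      x + 1 + 1 + (j : Fin (2 * k + 2)) ≠ x + c := by
    rw [add_assoc, add_assoc, Ne, add_right_inj, Fin.ext_iff]
    rw [(by push_cast; ring : 1 + (1 + (j : Fin (2 * k + 2))) = ((j + 2 : ℕ) : Fin (2 * k + 2))),
      Fin.val_cast_of_lt (by omega)]
    omega
  have halternate := hA.add_two_mul_add_one_mem (m := k) hx2 (by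
    intro j hj hmem
    rw [hM, mem_insert, mem_singleton] at hmem
    rcases hmem with h | h
    · exact hnot j hj 0 (by simp) (by rw [h, add_zero])
    · exact hnot j hj 1 (by simp) h)
  have hzd : z = x + 1 + ((z - (x + 1)).val : Fin (2 * k + 2)) := by simp
  set d := (z - (x + 1)).val
  have hdlt : d < 2 * k + 2 := Fin.isLt _
  have hdpar := Fin.val_add_mod_two ⟨k + 1, by ring⟩ (x + 1) (d : Fin (2 * k + 2))
  rw [← hzd, Fin.val_cast_of_lt hdlt] at hdpar
  have hd0 : d ≠ 0 := fun h => hzx (by rw [hzd, h, Nat.cast_zero, add_zero])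
  obtain ⟨j, hj⟩ : ∃ j, d = 2 * j + 2 := ⟨d / 2 - 1, by omega⟩
  convert halternate j (by omega) using 1
  rw [hzd, hj]
  push_cast
  ring

end Consecutive

lemma not_disjoint_of_markers_eq {k : ℕ} (hk : 2 ≤ k) {A B : Finset (Fin (2 * k + 2))}
    {x y : Fin (2 * k + 2)} (hA : IsStableSet A) (hB : IsStableSet B)
    (hMA : markers A = {x, x + 1}) (hMB : markers B = {y, y + 1})
    (hxy : x.val % 2 = y.val % 2) : ¬ Disjoint A B := by
  have hx := Fin.val_add_one_mod_two ⟨k + 1, by ring⟩ x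
  have hy := Fin.val_add_one_mod_two ⟨k + 1, by ring⟩ y
  obtain ⟨v, hv, hvpar, hvx, hvy⟩ : ∃ v < 2 * k + 2,
      v % 2 = (x + 1).val % 2 ∧ v ≠ (x + 1).val ∧ v ≠ (y + 1).val := by
    -- at most two of `p`, `p + 2`, `p + 4` are excluded
    set p := (x + 1).val % 2
    by_cases h0 : p ≠ (x + 1).val ∧ p ≠ (y + 1).val
    · exact ⟨p, by omega, by omega, h0⟩
    by_cases h2 : p + 2 ≠ (x + 1).val ∧ p + 2 ≠ (y + 1).val
    · exact ⟨p + 2, by omega, by omega, h2⟩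
    · exact ⟨p + 4, by omega, by omega, by omega, by omega⟩
  have hvA := hA.mem_of_markers_eq (z := ⟨v, hv⟩) hMA hvpar (Fin.ne_of_val_ne hvx)
  have hvB := hB.mem_of_markers_eq (z := ⟨v, hv⟩) hMB (by simp only; omega)
    (Fin.ne_of_val_ne hvy)
  exact fun hd => disjoint_left.mp hd hvA hvB

def IsCyclicSucc (q x y : ℕ) : Prop := y = x + 1 ∨ (x + 1 = q ∧ y = 0)

instance (q x y : ℕ) : Decidable (IsCyclicSucc q x y) := inferInstanceAs (Decidable (_ ∨ _))

section Coordinates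

variable {k : ℕ}

def halfVal (x : Fin (2 * k + 2)) : ℕ := x.val / 2

lemma halfVal_lt (x : Fin (2 * k + 2)) : halfVal x < k + 1 := by
  have := x.isLt
  unfold halfVal
  omega

lemma halfVal_inj {x y : Fin (2 * k + 2)} (hx : x.val % 2 = 0) (hy : y.val % 2 = 0) :
    halfVal x = halfVal y ↔ x = y := by
  rw [Fin.ext_iff]
  unfold halfVal
  omega

lemma add_two_eq_iff_isCyclicSucc {x y : Fin (2 * k + 2)} (hx : x.val % 2 = 0)
    (hy : y.val % 2 = 0) : x + 2 = y ↔ IsCyclicSucc (k + 1) (halfVal x) (halfVal y) := by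
  have := x.isLt
  rw [show x + 2 = x + 1 + 1 by ring, Fin.ext_iff]
  simp only [Fin.val_add_one, Fin.ext_iff, Fin.val_last]
  unfold IsCyclicSucc halfVal
  split_ifs <;> omega

lemma add_one_eq_iff_halfVal_eq {e o : Fin (2 * k + 2)} (he : e.val % 2 = 0)
    (ho : o.val % 2 = 1) : e + 1 = o ↔ halfVal (e + 2) = halfVal (o + 1) := by
  rw [halfVal_inj (by rw [Fin.val_add_two_mod_two ⟨k + 1, by ring⟩, he])
    (by rw [Fin.val_add_one_mod_two ⟨k + 1, by ring⟩]; omega), show e + 2 = e + 1 + 1 by ring,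
    add_left_inj]

lemma add_one_eq_iff_isCyclicSucc {e o : Fin (2 * k + 2)} (he : e.val % 2 = 0)
    (ho : o.val % 2 = 1) :
    o + 1 = e ↔ IsCyclicSucc (k + 1) (halfVal (o + 1)) (halfVal (e + 2)) := by
  rw [← add_two_eq_iff_isCyclicSucc (by rw [Fin.val_add_one_mod_two ⟨k + 1, by ring⟩]; omega)
    (by rw [Fin.val_add_two_mod_two ⟨k + 1, by ring⟩, he]), add_left_inj]

end Coordinates

def CoordAdj (q a b a' b' : ℕ) : Prop :=
  ((a' = b ∨ IsCyclicSucc q b a') ∧ (a = b' ∨ IsCyclicSucc q b' a) ∧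
      ¬((a = b ∨ IsCyclicSucc q b a) ∧ (a' = b' ∨ IsCyclicSucc q b' a'))) ∨
    (IsCyclicSucc q b a ∧ a' = b') ∨ (a = b ∧ IsCyclicSucc q b' a')

theorem coordAdj_of_disjoint {k : ℕ} (hk : 2 ≤ k) {A B : Finset (Fin (2 * k + 2))}
    (hA : IsStableSet A) (hB : IsStableSet B) (hcA : #A = k) (hcB : #B = k) (hd : Disjoint A B)
    {eA oA eB oB : Fin (2 * k + 2)} (heA : eA.val % 2 = 0) (hoA : oA.val % 2 = 1)
    (heB : eB.val % 2 = 0) (hoB : oB.val % 2 = 1)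
    (hMA : markers A = {eA, oA}) (hMB : markers B = {eB, oB}) :
    CoordAdj (k + 1) (halfVal (eA + 2)) (halfVal (oA + 1)) (halfVal (eB + 2))
      (halfVal (oB + 1)) := by
  rw [CoordAdj, ← add_one_eq_iff_halfVal_eq heB hoA, ← add_one_eq_iff_isCyclicSucc heB hoA,
    ← add_one_eq_iff_halfVal_eq heA hoB, ← add_one_eq_iff_isCyclicSucc heA hoB,
    ← add_one_eq_iff_halfVal_eq heA hoA, ← add_one_eq_iff_isCyclicSucc heA hoA,
    ← add_one_eq_iff_halfVal_eq heB hoB, ← add_one_eq_iff_isCyclicSucc heB hoB]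
  have hn : 2 ∣ 2 * k + 2 := ⟨k + 1, by ring⟩
  have hU : #(A ∪ B)ᶜ = 2 := by
    rw [card_compl, card_union_of_disjoint hd, hcA, hcB, Fintype.card_fin]
    omega
  have hU' : #(B ∪ A)ᶜ = 2 := union_comm A B ▸ hU
  have heA' : eA ∈ markers A := by simp only [hMA, mem_insert_self]
  have hoA' : oA ∈ markers A := by simp only [hMA, mem_insert, mem_singleton, or_true]
  have heB' : eB ∈ markers B := by simp only [hMB, mem_insert_self]
  have hoB' : oB ∈ markers B := by simp only [hMB, mem_insert, mem_singleton, or_true]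
  by_cases hc : (eA + 1 = oA ∨ oA + 1 = eA) ∧ (eB + 1 = oB ∨ oB + 1 = eB)
  · obtain ⟨hAc | hAc, hBc | hBc⟩ := hc
    · refine absurd hd (not_disjoint_of_markers_eq (x := eA) (y := eB) hk hA hB ?_ ?_ (by omega))
      · rw [hMA, hAc]
      · rw [hMB, hBc]
    · exact Or.inr (Or.inr ⟨hAc, hBc⟩)
    · exact Or.inr (Or.inl ⟨hAc, hBc⟩)
    · refine absurd hd (not_disjoint_of_markers_eq (x := oA) (y := oB) hk hA hB ?_ ?_ (by omega))
      · rw [hMA, pair_comm, hAc]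
      · rw [hMB, pair_comm, hBc]
  refine Or.inl ⟨?_, ?_, hc⟩
  · rcases not_and_or.mp hc with hAc | hBc
    · exact hA.markers_adj_of_card_compl_union hB hn hU heA' hoA' heB' (by omega) (by omega) hAc
    · exact Or.comm.mp (hB.markers_adj_of_card_compl_union hA hn hU' hoB' heB' hoA' (by omega)
        (by omega) (fun h => hBc (Or.comm.mp h)))
  · rcases not_and_or.mp hc with hAc | hBc
    · exact Or.comm.mp (hA.markers_adj_of_card_compl_union hB hn hU hoA' heA' hoB' (by omega)
        (by omega) (fun h => hAc (Or.comm.mp h)))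
    · exact hB.markers_adj_of_card_compl_union hA hn hU' heB' hoB' heA' (by omega) (by omega) hBc

def shiftColor (q a b : ℕ) : Fin 4 × Fin 4 :=
  if IsCyclicSucc q b a then (if a = 1 then (2, 3) else if a = 0 then (0, 3) else (1, 3))
  else if a = b then (if a + 1 = q then (3, 0) else if a = 0 then (3, 2) else (3, 1))
  else if b < a then (1, 0)
  else if a = 0 then (0, 2)
  else if b + 1 = q then (2, 1)
  else (0, 1)

lemma shiftColor_fst_ne_snd (q a b : ℕ) : (shiftColor q a b).1 ≠ (shiftColor q a b).2 := by
  unfold shiftColor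
  split_ifs <;> decide

lemma shiftColor_adj {q a b a' b' : ℕ} (hq : 3 ≤ q) (ha : a < q) (hb : b < q) (ha' : a' < q)
    (hb' : b' < q) (h : CoordAdj q a b a' b') :
    (shiftColor q a b).2 = (shiftColor q a' b').1 ∨
      (shiftColor q a b).1 = (shiftColor q a' b').2 := by
  unfold CoordAdj at h
  unfold shiftColor
  split_ifs <;> simp only [IsCyclicSucc] at * <;> first | decide | omega

theorem statement2 (k : ℕ) (hk : 2 ≤ k) :
    Nonempty (schrijverGraph (2 * k + 2) k →g shiftGraph 4) := by
  choose e o he ho hM using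
    fun v : {A : Finset (Fin (2 * k + 2)) // A.card = k ∧ IsStableSet A} =>
      v.2.2.exists_markers_eq_pair v.2.1
  refine ⟨⟨fun v => ⟨shiftColor (k + 1) (halfVal (e v + 2)) (halfVal (o v + 1)),
    shiftColor_fst_ne_snd _ _ _⟩, ?_⟩⟩
  rintro v w ⟨hvw, -⟩
  exact shiftColor_adj (by omega) (halfVal_lt _) (halfVal_lt _) (halfVal_lt _) (halfVal_lt _)
    (coordAdj_of_disjoint hk v.2.2 w.2.2 v.2.1 w.2.1 hvw (he v) (ho v) (he w) (ho w) (hM v) (hM w))
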